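/- The quantity ρ(μ₁,μ₂) = min(M₁,M₂)·W₁(μ̃₁,μ̃₂) + |M₁ - M₂| and the flat metric ρ_F are bi-Lipschitz equivalent on the set of nonnegative Radon measures with positive mass supported in a fixed bounded interval K: there is a constant C_K = (1/3)min(1, 2/|K|) > 0 with C_K ρ(μ₁,μ₂) ≤ ρ_F(μ₁,μ₂) ≤ ρ(μ₁,μ₂). -/

import Mathlib

open MeasureTheory

noncomputable def flatDist (μ ν : Measure ℝ) : ℝ :=
  sSup {r : ℝ | ∃ φ : ℝ → ℝ, LipschitzWith 1 φ ∧ (∀ x, |φ x| ≤ 1) ∧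
    r = ∫ x, φ x ∂μ - ∫ x, φ x ∂ν}

noncomputable def W1 (μ ν : Measure ℝ) : ℝ :=
  sSup {r : ℝ | ∃ φ : ℝ → ℝ, LipschitzWith 1 φ ∧
    r = ∫ x, φ x ∂μ - ∫ x, φ x ∂ν}


/-!
Write `Mᵢ` for the masses and `aᵢ = ∫ φ dμ̃ᵢ`, so that `∫ φ dμ₁ - ∫ φ dμ₂ = M₁ a₁ - M₂ a₂`.
This differs from `min M₁ M₂ * (a₁ - a₂)` by at most `|M₁ - M₂| * max |aᵢ|`. For a flat test
function `|aᵢ| ≤ 1`, which gives `ρ_F ≤ ρ`. Conversely, the constants `±1` give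
`|M₁ - M₂| ≤ ρ_F`; a 1-Lipschitz `φ` shifted to vanish at the midpoint of `K` is bounded by
`|K|/2` on `K`, so with `s = max 1 (|K|/2)` the truncation of `φ / s` to `[-1, 1]` is a flat test
function agreeing with `φ / s` on `K`. Hence `M₁ a₁ - M₂ a₂ ≤ s ρ_F`, and the same comparison
gives `min M₁ M₂ * W₁ ≤ 2 s ρ_F`, so `ρ ≤ 3 s ρ_F` with `1 / s = min 1 (2 / |K|)`.
-/

open Set

lemma abs_mul_sub_mul_sub_min_mul_le {M₁ M₂ x₁ x₂ s : ℝ} (h₁ : |x₁| ≤ s) (h₂ : |x₂| ≤ s) :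
    |M₁ * x₁ - M₂ * x₂ - min M₁ M₂ * (x₁ - x₂)| ≤ s * |M₁ - M₂| := by
  rcases le_total M₁ M₂ with h | h
  · rw [min_eq_left h, show M₁ * x₁ - M₂ * x₂ - M₁ * (x₁ - x₂) = (M₁ - M₂) * x₂ by ring,
      abs_mul, mul_comm]
    exact mul_le_mul_of_nonneg_right h₂ (abs_nonneg _)
  · rw [min_eq_right h, show M₁ * x₁ - M₂ * x₂ - M₂ * (x₁ - x₂) = (M₁ - M₂) * x₁ by ring,
      abs_mul, mul_comm]
    exact mul_le_mul_of_nonneg_right h₁ (abs_nonneg _)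

lemma min_one_two_div_eq_inv_max {L : ℝ} (hL : 0 < L) : min 1 (2 / L) = (max 1 (L / 2))⁻¹ := by
  rcases le_total L 2 with h | h
  · rw [min_eq_left ((one_le_div hL).2 h), max_eq_left (by linarith), inv_one]
  · rw [min_eq_right ((div_le_one hL).2 h), max_eq_right (by linarith), inv_div]

lemma LipschitzWith.abs_sub_midpoint_le {f : ℝ → ℝ} (hf : LipschitzWith 1 f) {a b x : ℝ}
    (hx : x ∈ Icc a b) : |f x - f ((a + b) / 2)| ≤ (b - a) / 2 := by
  have h := hf.dist_le_mul x ((a + b) / 2)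
  rw [NNReal.coe_one, one_mul, Real.dist_eq, Real.dist_eq] at h
  exact h.trans (abs_le.2 ⟨by linarith [hx.1], by linarith [hx.2]⟩)

lemma LipschitzWith.max_neg_one_min_one_div {f : ℝ → ℝ} (hf : LipschitzWith 1 f) {s : ℝ}
    (hs : 1 ≤ s) :
    LipschitzWith 1 fun x => max (-1) (min 1 (f x / s)) := by
  have hdiv : LipschitzWith 1 fun x => f x / s := by
    have hs' : ‖s⁻¹‖₊ * 1 ≤ 1 := by
      rw [mul_one, ← NNReal.coe_le_coe, coe_nnnorm, norm_inv, Real.norm_eq_abs,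
        abs_of_pos (by linarith)]
      exact inv_le_one_of_one_le₀ hs
    simpa [Function.comp_def, div_eq_inv_mul] using
      ((lipschitzWith_smul s⁻¹).comp hf).weaken hs'
  exact (hdiv.const_min 1).const_max (-1)

lemma Continuous.integrable_of_measure_compl_eq_zero {X : Type*} [TopologicalSpace X]
    [T2Space X] [MeasurableSpace X] [OpensMeasurableSpace X] {μ : Measure X}
    [IsFiniteMeasureOnCompacts μ] {f : X → ℝ} (hf : Continuous f) {K : Set X}
    (hK : IsCompact K) (hμ : μ Kᶜ = 0) : Integrable f μ := by
  rw [← Measure.restrict_eq_self_of_ae_mem (mem_ae_iff.2 hμ)]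
  exact hf.continuousOn.integrableOn_compact hK

lemma abs_integral_le_measureReal_univ {X : Type*} [MeasurableSpace X] {μ : Measure X}
    [IsFiniteMeasure μ] {f : X → ℝ} (hf : ∀ x, |f x| ≤ 1) : |∫ x, f x ∂μ| ≤ μ.real univ := by
  simpa using norm_integral_le_of_norm_le_const (μ := μ) (C := 1)
    (.of_forall fun x => (Real.norm_eq_abs _).trans_le (hf x))

lemma integral_eq_measureReal_univ_mul_integral_normalized {X : Type*} [MeasurableSpace X]
    (μ : Measure X) [IsFiniteMeasure μ] (f : X → ℝ) :
    ∫ x, f x ∂μ = μ.real univ * ∫ x, f x ∂((μ univ)⁻¹ • μ) := by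
  rcases eq_or_ne μ 0 with rfl | hμ
  · simp
  have := NeZero.mk hμ
  rw [integral_smul_measure, ENNReal.toReal_inv, smul_eq_mul, ← mul_assoc, ← measureReal_def,
    mul_inv_cancel₀ measureReal_univ_ne_zero, one_mul]

section Flat

variable {μ ν : Measure ℝ}

lemma integral_sub_integral_le_flatDist [IsFiniteMeasure μ] [IsFiniteMeasure ν] {φ : ℝ → ℝ}
    (hφ : LipschitzWith 1 φ) (hφ₁ : ∀ x, |φ x| ≤ 1) :
    ∫ x, φ x ∂μ - ∫ x, φ x ∂ν ≤ flatDist μ ν := by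
  refine le_csSup ⟨μ.real univ + ν.real univ, ?_⟩ ⟨φ, hφ, hφ₁, rfl⟩
  rintro _ ⟨ψ, -, hψ₁, rfl⟩
  have hμψ := abs_integral_le_measureReal_univ (μ := μ) hψ₁
  have hνψ := abs_integral_le_measureReal_univ (μ := ν) hψ₁
  linarith [(abs_le.1 hμψ).2, (abs_le.1 hνψ).1]

lemma flatDist_le {C : ℝ} (h : ∀ φ : ℝ → ℝ, LipschitzWith 1 φ → (∀ x, |φ x| ≤ 1) →
      ∫ x, φ x ∂μ - ∫ x, φ x ∂ν ≤ C) : flatDist μ ν ≤ C :=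
  csSup_le ⟨0, fun _ => 0, LipschitzWith.const' 0, by simp, by simp⟩
    (by rintro _ ⟨φ, hφ, hφ₁, rfl⟩; exact h φ hφ hφ₁)

lemma abs_measureReal_univ_sub_le_flatDist [IsFiniteMeasure μ] [IsFiniteMeasure ν] :
    |μ.real univ - ν.real univ| ≤ flatDist μ ν := by
  have h_one := integral_sub_integral_le_flatDist (μ := μ) (ν := ν) (φ := fun _ => 1)
    (LipschitzWith.const' 1) (by simp)
  have h_neg_one := integral_sub_integral_le_flatDist (μ := μ) (ν := ν) (φ := fun _ => -1)
    (LipschitzWith.const' (-1)) (by simp)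
  simp only [integral_const, smul_eq_mul, mul_one, mul_neg] at h_one h_neg_one
  exact abs_sub_le_iff.2 ⟨h_one, by linarith⟩

lemma integral_sub_integral_le_mul_flatDist [IsFiniteMeasure μ] [IsFiniteMeasure ν] {K : Set ℝ}
    (hμ : μ Kᶜ = 0) (hν : ν Kᶜ = 0) {f : ℝ → ℝ} (hf : LipschitzWith 1 f) {s : ℝ} (hs : 1 ≤ s)
    (hfs : ∀ x ∈ K, |f x| ≤ s) :
    ∫ x, f x ∂μ - ∫ x, f x ∂ν ≤ s * flatDist μ ν := by
  have hs₀ : 0 < s := by linarith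
  have hclamp : ∀ x ∈ K, max (-1) (min 1 (f x / s)) = f x / s := fun x hx => by
    obtain ⟨hlo, hhi⟩ := abs_le.1 (hfs x hx)
    rw [min_eq_right ((div_le_one hs₀).2 hhi), max_eq_right ((le_div_iff₀ hs₀).2 (by linarith))]
  have hint : ∀ ρ : Measure ℝ, ρ Kᶜ = 0 →
      ∫ x, max (-1) (min 1 (f x / s)) ∂ρ = (∫ x, f x ∂ρ) / s := fun ρ hρ => by
    rw [← integral_div]
    exact integral_congr_ae (Filter.Eventually.mono (mem_ae_iff.2 hρ) hclamp)
  have h := integral_sub_integral_le_flatDist (μ := μ) (ν := ν) (hf.max_neg_one_min_one_div hs)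
    fun x => abs_le.2 ⟨le_max_left _ _, max_le (by norm_num) (min_le_left _ _)⟩
  rw [hint μ hμ, hint ν hν, ← sub_div, div_le_iff₀ hs₀] at h
  linarith

end Flat

section W1

variable {μ ν : Measure ℝ}

lemma abs_integral_sub_midpoint_le [IsProbabilityMeasure μ] {a b : ℝ} (hμ : μ (Icc a b)ᶜ = 0)
    {f : ℝ → ℝ} (hf : LipschitzWith 1 f) : |∫ x, f x ∂μ - f ((a + b) / 2)| ≤ (b - a) / 2 := by
  have hint := hf.continuous.integrable_of_measure_compl_eq_zero isCompact_Icc hμ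
  have hsub : ∫ x, (f x - f ((a + b) / 2)) ∂μ = ∫ x, f x ∂μ - f ((a + b) / 2) := by
    simp [integral_sub hint (integrable_const _)]
  simpa [hsub] using norm_integral_le_of_norm_le_const (μ := μ)
    (Filter.Eventually.mono (mem_ae_iff.2 hμ) fun x hx =>
      (Real.norm_eq_abs _).trans_le (hf.abs_sub_midpoint_le hx))

lemma integral_sub_integral_le_W1 [IsProbabilityMeasure μ] [IsProbabilityMeasure ν] {a b : ℝ}
    (hμ : μ (Icc a b)ᶜ = 0) (hν : ν (Icc a b)ᶜ = 0) {φ : ℝ → ℝ} (hφ : LipschitzWith 1 φ) :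
    ∫ x, φ x ∂μ - ∫ x, φ x ∂ν ≤ W1 μ ν := by
  refine le_csSup ⟨b - a, ?_⟩ ⟨φ, hφ, rfl⟩
  rintro _ ⟨ψ, hψ, rfl⟩
  have hμψ := abs_integral_sub_midpoint_le hμ hψ
  have hνψ := abs_integral_sub_midpoint_le hν hψ
  linarith [(abs_le.1 hμψ).2, (abs_le.1 hνψ).1]

lemma W1_le {C : ℝ} (h : ∀ φ : ℝ → ℝ, LipschitzWith 1 φ → ∫ x, φ x ∂μ - ∫ x, φ x ∂ν ≤ C) :
    W1 μ ν ≤ C :=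
  csSup_le ⟨0, fun _ => 0, LipschitzWith.const' 0, by simp⟩
    (by rintro _ ⟨φ, hφ, rfl⟩; exact h φ hφ)

end W1

section Comparison

variable {μ₁ μ₂ : Measure ℝ} [IsFiniteMeasure μ₁] [IsFiniteMeasure μ₂] [NeZero μ₁] [NeZero μ₂]
  {a b : ℝ}

theorem flatDist_le_min_mul_W1_add_abs (h₁ : μ₁ (Icc a b)ᶜ = 0) (h₂ : μ₂ (Icc a b)ᶜ = 0) :
    flatDist μ₁ μ₂ ≤ min (μ₁.real univ) (μ₂.real univ) *
      W1 ((μ₁ univ)⁻¹ • μ₁) ((μ₂ univ)⁻¹ • μ₂) + |μ₁.real univ - μ₂.real univ| := by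
  refine flatDist_le fun φ hφ hφ₁ => ?_
  rw [integral_eq_measureReal_univ_mul_integral_normalized μ₁,
    integral_eq_measureReal_univ_mul_integral_normalized μ₂]
  have hW := integral_sub_integral_le_W1 (μ := (μ₁ univ)⁻¹ • μ₁) (ν := (μ₂ univ)⁻¹ • μ₂)
    (a := a) (b := b) (by simp [h₁]) (by simp [h₂]) hφ
  have hdev := abs_mul_sub_mul_sub_min_mul_le (M₁ := μ₁.real univ) (M₂ := μ₂.real univ)
    ((abs_integral_le_measureReal_univ (μ := (μ₁ univ)⁻¹ • μ₁) hφ₁).trans_eq probReal_univ)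
    ((abs_integral_le_measureReal_univ (μ := (μ₂ univ)⁻¹ • μ₂) hφ₁).trans_eq probReal_univ)
  have hmin : 0 ≤ min (μ₁.real univ) (μ₂.real univ) := le_min measureReal_nonneg measureReal_nonneg
  linarith [(abs_le.1 hdev).2, mul_le_mul_of_nonneg_left hW hmin]

theorem min_mul_W1_le_flatDist (h₁ : μ₁ (Icc a b)ᶜ = 0) (h₂ : μ₂ (Icc a b)ᶜ = 0) :
    min (μ₁.real univ) (μ₂.real univ) * W1 ((μ₁ univ)⁻¹ • μ₁) ((μ₂ univ)⁻¹ • μ₂) ≤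
      2 * max 1 ((b - a) / 2) * flatDist μ₁ μ₂ := by
  set s := max 1 ((b - a) / 2)
  have hm : 0 < min (μ₁.real univ) (μ₂.real univ) :=
    lt_min measureReal_univ_pos measureReal_univ_pos
  rw [← le_div_iff₀' hm]
  refine W1_le fun φ hφ => ?_
  rw [le_div_iff₀' hm]
  set c := φ ((a + b) / 2)
  have hdev := abs_mul_sub_mul_sub_min_mul_le (M₁ := μ₁.real univ) (M₂ := μ₂.real univ)
    (abs_integral_sub_midpoint_le (μ := (μ₁ univ)⁻¹ • μ₁) (a := a) (b := b) (by simp [h₁]) hφ)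
    (abs_integral_sub_midpoint_le (μ := (μ₂ univ)⁻¹ • μ₂) (a := a) (b := b) (by simp [h₂]) hφ)
  have hflat : ∫ x, (φ x - c) ∂μ₁ - ∫ x, (φ x - c) ∂μ₂ ≤ s * flatDist μ₁ μ₂ :=
    integral_sub_integral_le_mul_flatDist h₁ h₂ (by simpa using hφ.sub (LipschitzWith.const c))
      (le_max_left _ _) fun x hx => (hφ.abs_sub_midpoint_le hx).trans (le_max_right _ _)
  have hshift : ∀ μ : Measure ℝ, [IsFiniteMeasure μ] → μ (Icc a b)ᶜ = 0 →
      ∫ x, (φ x - c) ∂μ = μ.real univ * (∫ x, φ x ∂((μ univ)⁻¹ • μ) - c) := fun μ _ hμ => by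
    rw [integral_sub (hφ.continuous.integrable_of_measure_compl_eq_zero isCompact_Icc hμ)
      (integrable_const c), integral_const, integral_eq_measureReal_univ_mul_integral_normalized μ,
      smul_eq_mul, mul_sub]
  have hΔ : (b - a) / 2 * |μ₁.real univ - μ₂.real univ| ≤ s * flatDist μ₁ μ₂ :=
    mul_le_mul (le_max_right _ _) abs_measureReal_univ_sub_le_flatDist (abs_nonneg _)
      (zero_le_one.trans (le_max_left _ _))
  rw [hshift μ₁ h₁, hshift μ₂ h₂] at hflat
  linarith [(abs_le.1 hdev).1]

end Comparison

/-- ρ and ρ_F are bi-Lipschitz equivalent on nonnegative measures with positive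
mass supported in a fixed bounded interval K = [k₁,k₂]:
C_K ρ(μ₁,μ₂) ≤ ρ_F(μ₁,μ₂) ≤ ρ(μ₁,μ₂) with C_K = (1/3) min(1, 2/|K|) > 0. -/
theorem rho_flatDist_equivalent (k₁ k₂ : ℝ) (hk : k₁ < k₂) (μ₁ μ₂ : Measure ℝ)
    [IsFiniteMeasure μ₁] [IsFiniteMeasure μ₂]
    (hs1 : μ₁ (Set.Icc k₁ k₂)ᶜ = 0) (hs2 : μ₂ (Set.Icc k₁ k₂)ᶜ = 0)
    (hM1 : 0 < (μ₁ Set.univ).toReal) (hM2 : 0 < (μ₂ Set.univ).toReal) :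
    0 < (1 / 3) * min 1 (2 / (k₂ - k₁)) ∧
    (1 / 3) * min 1 (2 / (k₂ - k₁)) *
        (min (μ₁ Set.univ).toReal (μ₂ Set.univ).toReal *
          W1 ((μ₁ Set.univ)⁻¹ • μ₁) ((μ₂ Set.univ)⁻¹ • μ₂) +
        |(μ₁ Set.univ).toReal - (μ₂ Set.univ).toReal|) ≤ flatDist μ₁ μ₂ ∧
    flatDist μ₁ μ₂ ≤
      min (μ₁ Set.univ).toReal (μ₂ Set.univ).toReal *
          W1 ((μ₁ Set.univ)⁻¹ • μ₁) ((μ₂ Set.univ)⁻¹ • μ₂) +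
        |(μ₁ Set.univ).toReal - (μ₂ Set.univ).toReal| := by
  have : NeZero μ₁ := ⟨fun h => by simp [h] at hM1⟩
  have : NeZero μ₂ := ⟨fun h => by simp [h] at hM2⟩
  simp only [← measureReal_def]
  set s := max 1 ((k₂ - k₁) / 2)
  have hC : min 1 (2 / (k₂ - k₁)) = s⁻¹ := min_one_two_div_eq_inv_max (sub_pos.2 hk)
  have hs : 1 ≤ s := le_max_left _ _
  have hW := min_mul_W1_le_flatDist hs1 hs2
  have hΔ := abs_measureReal_univ_sub_le_flatDist (μ := μ₁) (ν := μ₂)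
  have hF := (abs_nonneg _).trans hΔ
  refine ⟨by rw [hC]; positivity, ?_, flatDist_le_min_mul_W1_add_abs hs1 hs2⟩
  calc 1 / 3 * min 1 (2 / (k₂ - k₁)) * (min (μ₁.real univ) (μ₂.real univ) *
        W1 ((μ₁ univ)⁻¹ • μ₁) ((μ₂ univ)⁻¹ • μ₂) + |μ₁.real univ - μ₂.real univ|)
      ≤ 1 / 3 * s⁻¹ * (3 * s * flatDist μ₁ μ₂) := by
        rw [hC]
        gcongr
        linarith [mul_le_mul_of_nonneg_right hs hF]
    _ = flatDist μ₁ μ₂ := by field_simp
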